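/- arXiv:1403.0054 — 2 statements merged into one kernel-verified Lean document; each statement's English description precedes it below -/
import Mathlib

section
/- Let η_1, …, η_{K−1} ≥ 0. For (w, V) define the worst-case harvested power WHP(w, V) = inf over all (Δg_1, …, Δg_{K−1}) with Δg_kᴴ Δg_k ≤ ε_k² of Σ_{k=1}^{K−1} η_k (ĝ_k + Δg_k)ᴴ (w wᴴ + V)(ĝ_k + Δg_k), and for (W̄, V̄, ξ) define WHP'(W̄, V̄) analogously with w wᴴ + V replaced by W̄ + V̄. Then the supremum over (w, V) ∈ F of the worst-case energy harvesting efficiency WHP(w, V)/(‖w‖² + Tr(V)) equals the supremum over (W̄, V̄, ξ) ∈ F' of WHP'(W̄, V̄); moreover, for every (w, V) ∈ F the point (ξ₀ w wᴴ, ξ₀ V, ξ₀) with ξ₀ = 1/(‖w‖² + Tr(V)) lies in F' and satisfies WHP(w, V)/(‖w‖² + Tr(V)) = WHP'(ξ₀ w wᴴ, ξ₀ V). -/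
/-!
The Charnes–Cooper substitution `(W̄, V̄, ξ) = (w wᴴ / s, V / s, 1 / s)` with `s = ‖w‖² + Tr V`
maps `F` onto `F'`. Written in terms of `(w wᴴ, V)` and a noise scale `ξ`, every constraint of `F`
is positively homogeneous, so the rescaling preserves it. A positive SINR target forces `w ≠ 0`,
hence `s > 0` and `rank (w wᴴ) = 1`. Conversely the normalisation `Tr W̄ + Tr V̄ = 1` fixes the
scale, and a rank-one positive semidefinite `W̄` is `u uᴴ` for some `u`, which inverts the map.
The worst-case harvested power is positively homogeneous in its matrix, so the objective values
correspond pointwise and the two suprema are suprema of the same set.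
-/

open Matrix
open scoped ComplexOrder

/-- The original feasible set `F`: pairs `(w, V)` with `V` Hermitian PSD satisfying the
SINR constraint C1 of the desired receiver, the robust eavesdropper constraints C2 and C3,
and the power constraint C4. -/
def FeasOrig {NT K J : ℕ} (h : Fin NT → ℂ)
    (ghat : Fin (K - 1) → Fin NT → ℂ) (lhat : Fin J → Fin NT → ℂ)
    (Γreq σz2 Pmax σPU2 : ℝ) (Γtol σzk2 ε : Fin (K - 1) → ℝ) (ΓtolPU υ : Fin J → ℝ)
    (w : Fin NT → ℂ) (V : Matrix (Fin NT) (Fin NT) ℂ) : Prop :=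
  V.PosSemidef ∧
  Γreq * ((Matrix.vecMulVec h (star h) * V).trace.re + σz2) ≤
      (star w ⬝ᵥ Matrix.vecMulVec h (star h) *ᵥ w).re ∧
  (∀ k, ∀ Δg : Fin NT → ℂ, (star Δg ⬝ᵥ Δg).re ≤ ε k ^ 2 →
      ‖star (ghat k + Δg) ⬝ᵥ w‖ ^ 2 ≤
        Γtol k * ((star (ghat k + Δg) ⬝ᵥ V *ᵥ (ghat k + Δg)).re + σzk2 k)) ∧
  (∀ j, ∀ Δl : Fin NT → ℂ, (star Δl ⬝ᵥ Δl).re ≤ υ j ^ 2 →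
      ‖star (lhat j + Δl) ⬝ᵥ w‖ ^ 2 ≤
        ΓtolPU j * ((star (lhat j + Δl) ⬝ᵥ V *ᵥ (lhat j + Δl)).re + σPU2)) ∧
  (star w ⬝ᵥ w).re + V.trace.re ≤ Pmax

/-- The Charnes–Cooper transformed feasible set `F'`: triples `(W̄, V̄, ξ)` with `W̄, V̄`
Hermitian PSD, `ξ ≥ 0`, `rank W̄ = 1`, the transformed constraints, the transformed power
constraint, and the normalization `Tr(W̄) + Tr(V̄) = 1`. -/
def FeasTrans {NT K J : ℕ} (h : Fin NT → ℂ)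
    (ghat : Fin (K - 1) → Fin NT → ℂ) (lhat : Fin J → Fin NT → ℂ)
    (Γreq σz2 Pmax σPU2 : ℝ) (Γtol σzk2 ε : Fin (K - 1) → ℝ) (ΓtolPU υ : Fin J → ℝ)
    (Wb Vb : Matrix (Fin NT) (Fin NT) ℂ) (ξ : ℝ) : Prop :=
  Wb.PosSemidef ∧ Vb.PosSemidef ∧ 0 ≤ ξ ∧ Wb.rank = 1 ∧
  Γreq * ((Matrix.vecMulVec h (star h) * Vb).trace.re + σz2 * ξ) ≤
      (Matrix.vecMulVec h (star h) * Wb).trace.re ∧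
  (∀ k, ∀ Δg : Fin NT → ℂ, (star Δg ⬝ᵥ Δg).re ≤ ε k ^ 2 →
      (star (ghat k + Δg) ⬝ᵥ Wb *ᵥ (ghat k + Δg)).re ≤
        Γtol k * ((star (ghat k + Δg) ⬝ᵥ Vb *ᵥ (ghat k + Δg)).re + σzk2 k * ξ)) ∧
  (∀ j, ∀ Δl : Fin NT → ℂ, (star Δl ⬝ᵥ Δl).re ≤ υ j ^ 2 →
      (star (lhat j + Δl) ⬝ᵥ Wb *ᵥ (lhat j + Δl)).re ≤
        ΓtolPU j * ((star (lhat j + Δl) ⬝ᵥ Vb *ᵥ (lhat j + Δl)).re + σPU2 * ξ)) ∧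
  Wb.trace.re + Vb.trace.re ≤ Pmax * ξ ∧
  Wb.trace.re + Vb.trace.re = 1

/-- The worst-case total harvested power of the matrix `M` (here `M = w wᴴ + V` or
`M = W̄ + V̄`) over all admissible channel uncertainties. -/
noncomputable def WHP {NT K : ℕ} (ghat : Fin (K - 1) → Fin NT → ℂ)
    (ε η : Fin (K - 1) → ℝ) (M : Matrix (Fin NT) (Fin NT) ℂ) : ℝ :=
  sInf {t : ℝ | ∃ Δg : Fin (K - 1) → Fin NT → ℂ,
    (∀ k, (star (Δg k) ⬝ᵥ Δg k).re ≤ ε k ^ 2) ∧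
    t = ∑ k, η k * (star (ghat k + Δg k) ⬝ᵥ M *ᵥ (ghat k + Δg k)).re}

namespace Matrix

variable {n : Type*} [Fintype n]

lemma re_star_dotProduct_vecMulVec_mulVec (x w : n → ℂ) :
    (star x ⬝ᵥ vecMulVec w (star w) *ᵥ x).re = ‖star x ⬝ᵥ w‖ ^ 2 := by
  rw [vecMulVec_mulVec, dotProduct_smul, MulOpposite.smul_eq_mul_unop, MulOpposite.unop_op,
    star_dotProduct, Complex.star_def, Complex.conj_mul', Complex.norm_conj]
  norm_cast

lemma trace_vecMulVec_star (w : n → ℂ) : (vecMulVec w (star w)).trace = star w ⬝ᵥ w := by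
  rw [trace_vecMulVec, dotProduct_comm]

lemma trace_mul_vecMulVec_star (A : Matrix n n ℂ) (w : n → ℂ) :
    (A * vecMulVec w (star w)).trace = star w ⬝ᵥ A *ᵥ w := by
  rw [mul_vecMulVec, trace_vecMulVec, dotProduct_comm]

lemma re_star_dotProduct_ofReal_smul_mulVec (c : ℝ) (M : Matrix n n ℂ) (x : n → ℂ) :
    (star x ⬝ᵥ ((c : ℂ) • M) *ᵥ x).re = c * (star x ⬝ᵥ M *ᵥ x).re := by
  rw [smul_mulVec, dotProduct_smul, smul_eq_mul, Complex.re_ofReal_mul]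

lemma ofReal_smul_vecMulVec_star {c : ℝ} (hc : 0 ≤ c) (w : n → ℂ) :
    (c : ℂ) • vecMulVec w (star w) = vecMulVec ((√c : ℂ) • w) (star ((√c : ℂ) • w)) := by
  rw [star_smul, smul_vecMulVec, vecMulVec_smul, smul_smul, Complex.star_def,
    Complex.conj_ofReal, ← Complex.ofReal_mul, Real.mul_self_sqrt hc]

lemma rank_vecMulVec_star_self {w : n → ℂ} (hw : w ≠ 0) : (vecMulVec w (star w)).rank = 1 := by
  refine le_antisymm (rank_vecMulVec_le _ _) (Nat.one_le_iff_ne_zero.mpr fun h0 => hw ?_)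
  rw [rank, Submodule.finrank_eq_zero, LinearMap.range_eq_bot] at h0
  simpa [vecMulVec_mulVec] using congrArg (· w) h0

namespace PosSemidef

lemma re_dotProduct_mulVec_nonneg {M : Matrix n n ℂ} (hM : M.PosSemidef) (x : n → ℂ) :
    0 ≤ (star x ⬝ᵥ M *ᵥ x).re :=
  (Complex.nonneg_iff.mp (hM.dotProduct_mulVec_nonneg x)).1

lemma re_trace_nonneg {M : Matrix n n ℂ} (hM : M.PosSemidef) : 0 ≤ M.trace.re :=
  (Complex.nonneg_iff.mp hM.trace_nonneg).1

lemma exists_eq_vecMulVec_star_of_rank_eq_one [DecidableEq n] {A : Matrix n n ℂ}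
    (hA : A.PosSemidef) (hrank : A.rank = 1) : ∃ u : n → ℂ, A = vecMulVec u (star u) := by
  have hcard : Fintype.card {i // hA.1.eigenvalues i ≠ 0} = 1 := by
    rw [← hA.1.rank_eq_card_non_zero_eigs, hrank]
  obtain ⟨⟨i, hi⟩, hunique⟩ := Fintype.card_eq_one_iff.mp hcard
  have hzero : ∀ j ≠ i, hA.1.eigenvalues j = 0 := fun j hj =>
    by_contra fun h => hj (congrArg Subtype.val (hunique ⟨j, h⟩))
  refine ⟨(√(hA.1.eigenvalues i) : ℂ) • hA.1.eigenvectorBasis i, ?_⟩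
  rw [← ofReal_smul_vecMulVec_star (hA.eigenvalues_nonneg i)]
  conv_lhs => rw [hA.1.spectral_theorem, Unitary.conjStarAlgAut_apply]
  ext j k
  rw [mul_apply, Finset.sum_eq_single i]
  · simp only [Complex.coe_algebraMap, mul_diagonal, IsHermitian.eigenvectorUnitary_apply,
      Function.comp_apply, star_apply, RCLike.star_def, smul_apply, vecMulVec_apply,
      Pi.star_apply, smul_eq_mul]
    ring
  · intro b _ hb
    simp [mul_diagonal, hzero b hb]
  · simp

end PosSemidef

end Matrix

section CharnesCooper

variable {NT K J : ℕ} (h : Fin NT → ℂ)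
    (ghat : Fin (K - 1) → Fin NT → ℂ) (lhat : Fin J → Fin NT → ℂ)
    (Γreq σz2 Pmax σPU2 : ℝ) (Γtol σzk2 ε : Fin (K - 1) → ℝ) (ΓtolPU υ : Fin J → ℝ)

def HomogeneousConstraints (W V : Matrix (Fin NT) (Fin NT) ℂ) (ξ : ℝ) : Prop :=
  Γreq * ((vecMulVec h (star h) * V).trace.re + σz2 * ξ) ≤
      (vecMulVec h (star h) * W).trace.re ∧
  (∀ k, ∀ Δg : Fin NT → ℂ, (star Δg ⬝ᵥ Δg).re ≤ ε k ^ 2 →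
      (star (ghat k + Δg) ⬝ᵥ W *ᵥ (ghat k + Δg)).re ≤
        Γtol k * ((star (ghat k + Δg) ⬝ᵥ V *ᵥ (ghat k + Δg)).re + σzk2 k * ξ)) ∧
  (∀ j, ∀ Δl : Fin NT → ℂ, (star Δl ⬝ᵥ Δl).re ≤ υ j ^ 2 →
      (star (lhat j + Δl) ⬝ᵥ W *ᵥ (lhat j + Δl)).re ≤
        ΓtolPU j * ((star (lhat j + Δl) ⬝ᵥ V *ᵥ (lhat j + Δl)).re + σPU2 * ξ)) ∧
  W.trace.re + V.trace.re ≤ Pmax * ξ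

variable {h ghat lhat Γreq σz2 Pmax σPU2 Γtol σzk2 ε ΓtolPU υ}

lemma HomogeneousConstraints.ofReal_smul {W V : Matrix (Fin NT) (Fin NT) ℂ} {ξ c : ℝ}
    (hWV : HomogeneousConstraints h ghat lhat Γreq σz2 Pmax σPU2 Γtol σzk2 ε ΓtolPU υ W V ξ)
    (hc : 0 ≤ c) :
    HomogeneousConstraints h ghat lhat Γreq σz2 Pmax σPU2 Γtol σzk2 ε ΓtolPU υ
      ((c : ℂ) • W) ((c : ℂ) • V) (c * ξ) := by
  obtain ⟨hC1, hC2, hC3, hC4⟩ := hWV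
  simp only [HomogeneousConstraints, Matrix.mul_smul, trace_smul, smul_eq_mul,
    Complex.re_ofReal_mul, re_star_dotProduct_ofReal_smul_mulVec]
  refine ⟨?_, fun k Δg hΔg => ?_, fun j Δl hΔl => ?_, ?_⟩
  · linear_combination mul_le_mul_of_nonneg_left hC1 hc
  · linear_combination mul_le_mul_of_nonneg_left (hC2 k Δg hΔg) hc
  · linear_combination mul_le_mul_of_nonneg_left (hC3 j Δl hΔl) hc
  · linear_combination mul_le_mul_of_nonneg_left hC4 hc

lemma feasOrig_iff {w : Fin NT → ℂ} {V : Matrix (Fin NT) (Fin NT) ℂ} :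
    FeasOrig h ghat lhat Γreq σz2 Pmax σPU2 Γtol σzk2 ε ΓtolPU υ w V ↔
      V.PosSemidef ∧ HomogeneousConstraints h ghat lhat Γreq σz2 Pmax σPU2 Γtol σzk2 ε ΓtolPU υ
        (vecMulVec w (star w)) V 1 := by
  simp only [FeasOrig, HomogeneousConstraints, trace_mul_vecMulVec_star, trace_vecMulVec_star,
    re_star_dotProduct_vecMulVec_mulVec, mul_one]

lemma feasTrans_iff {Wb Vb : Matrix (Fin NT) (Fin NT) ℂ} {ξ : ℝ} :
    FeasTrans h ghat lhat Γreq σz2 Pmax σPU2 Γtol σzk2 ε ΓtolPU υ Wb Vb ξ ↔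
      Wb.PosSemidef ∧ Vb.PosSemidef ∧ 0 ≤ ξ ∧ Wb.rank = 1 ∧
        HomogeneousConstraints h ghat lhat Γreq σz2 Pmax σPU2 Γtol σzk2 ε ΓtolPU υ Wb Vb ξ ∧
        Wb.trace.re + Vb.trace.re = 1 := by
  simp only [FeasTrans, HomogeneousConstraints, and_assoc]

lemma ne_zero_of_feasOrig (hΓreq : 0 < Γreq) (hσz : 0 < σz2) {w : Fin NT → ℂ}
    {V : Matrix (Fin NT) (Fin NT) ℂ}
    (hF : FeasOrig h ghat lhat Γreq σz2 Pmax σPU2 Γtol σzk2 ε ΓtolPU υ w V) : w ≠ 0 := by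
  rintro rfl
  obtain ⟨hV, hC1, -⟩ := hF
  have hHV : 0 ≤ (vecMulVec h (star h) * V).trace.re := by
    rw [trace_mul_comm, trace_mul_vecMulVec_star]
    exact hV.re_dotProduct_mulVec_nonneg h
  simp only [star_zero, zero_dotProduct, Complex.zero_re] at hC1
  nlinarith

lemma totalPower_pos_of_feasOrig (hΓreq : 0 < Γreq) (hσz : 0 < σz2) {w : Fin NT → ℂ}
    {V : Matrix (Fin NT) (Fin NT) ℂ}
    (hF : FeasOrig h ghat lhat Γreq σz2 Pmax σPU2 Γtol σzk2 ε ΓtolPU υ w V) :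
    0 < (star w ⬝ᵥ w).re + V.trace.re :=
  add_pos_of_pos_of_nonneg
    (Complex.pos_iff.mp (dotProduct_star_self_pos_iff.mpr (ne_zero_of_feasOrig hΓreq hσz hF))).1
    hF.1.re_trace_nonneg

lemma feasTrans_of_feasOrig (hΓreq : 0 < Γreq) (hσz : 0 < σz2) {w : Fin NT → ℂ}
    {V : Matrix (Fin NT) (Fin NT) ℂ}
    (hF : FeasOrig h ghat lhat Γreq σz2 Pmax σPU2 Γtol σzk2 ε ΓtolPU υ w V) :
    FeasTrans h ghat lhat Γreq σz2 Pmax σPU2 Γtol σzk2 ε ΓtolPU υ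
      (((((star w ⬝ᵥ w).re + V.trace.re)⁻¹ : ℝ) : ℂ) • vecMulVec w (star w))
      (((((star w ⬝ᵥ w).re + V.trace.re)⁻¹ : ℝ) : ℂ) • V)
      ((star w ⬝ᵥ w).re + V.trace.re)⁻¹ := by
  have hs := totalPower_pos_of_feasOrig hΓreq hσz hF
  obtain ⟨hV, hWV⟩ := feasOrig_iff.mp hF
  set s := (star w ⬝ᵥ w).re + V.trace.re
  have hs' : (0 : ℂ) ≤ (s⁻¹ : ℝ) := Complex.zero_le_real.mpr (inv_nonneg.mpr hs.le)
  refine feasTrans_iff.mpr ⟨(posSemidef_vecMulVec_self_star w).smul hs', hV.smul hs',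
    inv_nonneg.mpr hs.le, ?_, by simpa only [mul_one] using hWV.ofReal_smul (inv_nonneg.mpr hs.le),
    ?_⟩
  · rw [rank_smul_of_mem_nonZeroDivisors _ (mem_nonZeroDivisors_of_ne_zero
      (Complex.ofReal_ne_zero.mpr (inv_ne_zero hs.ne'))),
      rank_vecMulVec_star_self (ne_zero_of_feasOrig hΓreq hσz hF)]
  · simp only [trace_smul, smul_eq_mul, Complex.re_ofReal_mul, trace_vecMulVec_star, ← mul_add]
    exact inv_mul_cancel₀ hs.ne'

lemma exists_feasOrig_of_feasTrans {Wb Vb : Matrix (Fin NT) (Fin NT) ℂ} {ξ : ℝ}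
    (hT : FeasTrans h ghat lhat Γreq σz2 Pmax σPU2 Γtol σzk2 ε ΓtolPU υ Wb Vb ξ) :
    ∃ w V, FeasOrig h ghat lhat Γreq σz2 Pmax σPU2 Γtol σzk2 ε ΓtolPU υ w V ∧
      ((((star w ⬝ᵥ w).re + V.trace.re)⁻¹ : ℝ) : ℂ) • vecMulVec w (star w) = Wb ∧
      ((((star w ⬝ᵥ w).re + V.trace.re)⁻¹ : ℝ) : ℂ) • V = Vb := by
  obtain ⟨hW, hV, hξ0, hrank, hWV, htr⟩ := feasTrans_iff.mp hT
  have hξ : 0 < ξ := hξ0.lt_of_ne <| by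
    rintro rfl
    linarith [hWV.2.2.2]
  obtain ⟨u, rfl⟩ := hW.exists_eq_vecMulVec_star_of_rank_eq_one hrank
  have hξ' : 0 ≤ ξ⁻¹ := inv_nonneg.mpr hξ0
  set w := (√ξ⁻¹ : ℂ) • u
  have hww : vecMulVec w (star w) = ((ξ⁻¹ : ℝ) : ℂ) • vecMulVec u (star u) :=
    (ofReal_smul_vecMulVec_star hξ' u).symm
  have hs : (star w ⬝ᵥ w).re + (((ξ⁻¹ : ℝ) : ℂ) • Vb).trace.re = ξ⁻¹ := by
    rw [← trace_vecMulVec_star, hww]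
    simp only [trace_smul, smul_eq_mul, Complex.re_ofReal_mul, ← mul_add, htr, mul_one]
  have hcancel : ∀ M : Matrix (Fin NT) (Fin NT) ℂ, ((ξ⁻¹⁻¹ : ℝ) : ℂ) • ((ξ⁻¹ : ℝ) : ℂ) • M = M :=
    fun M => by rw [inv_inv, Complex.ofReal_inv, smul_inv_smul₀ (Complex.ofReal_ne_zero.mpr hξ.ne')]
  refine ⟨w, ((ξ⁻¹ : ℝ) : ℂ) • Vb, feasOrig_iff.mpr ⟨hV.smul (Complex.zero_le_real.mpr hξ'), ?_⟩,
    ?_, ?_⟩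
  · rw [hww]
    simpa only [inv_mul_cancel₀ hξ.ne'] using hWV.ofReal_smul hξ'
  · rw [hs, hww, hcancel]
  · rw [hs, hcancel]

end CharnesCooper

lemma WHP_ofReal_smul {NT K : ℕ} (ghat : Fin (K - 1) → Fin NT → ℂ) (ε η : Fin (K - 1) → ℝ)
    (M : Matrix (Fin NT) (Fin NT) ℂ) {c : ℝ} (hc : 0 ≤ c) :
    WHP ghat ε η ((c : ℂ) • M) = c * WHP ghat ε η M := by
  have hsum : ∀ Δg : Fin (K - 1) → Fin NT → ℂ,
      ∑ k, η k * (star (ghat k + Δg k) ⬝ᵥ ((c : ℂ) • M) *ᵥ (ghat k + Δg k)).re =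
        c • ∑ k, η k * (star (ghat k + Δg k) ⬝ᵥ M *ᵥ (ghat k + Δg k)).re := fun Δg => by
    simp only [re_star_dotProduct_ofReal_smul_mulVec, smul_eq_mul, Finset.mul_sum, mul_left_comm]
  rw [WHP, WHP, ← smul_eq_mul, ← Real.sInf_smul_of_nonneg hc]
  congr 1
  ext t
  simp only [hsum, Set.mem_smul_set, Set.mem_ofPred_eq]
  constructor
  · rintro ⟨Δg, hΔg, rfl⟩
    exact ⟨_, ⟨Δg, hΔg, rfl⟩, rfl⟩
  · rintro ⟨_, ⟨Δg, hΔg, rfl⟩, rfl⟩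
    exact ⟨Δg, hΔg, rfl⟩

lemma WHP_div_totalPower {NT K : ℕ} (ghat : Fin (K - 1) → Fin NT → ℂ) (ε η : Fin (K - 1) → ℝ)
    (w : Fin NT → ℂ) {V : Matrix (Fin NT) (Fin NT) ℂ} (hV : V.PosSemidef) :
    WHP ghat ε η (vecMulVec w (star w) + V) / ((star w ⬝ᵥ w).re + V.trace.re) =
      WHP ghat ε η (((((star w ⬝ᵥ w).re + V.trace.re)⁻¹ : ℝ) : ℂ) • vecMulVec w (star w) +
        ((((star w ⬝ᵥ w).re + V.trace.re)⁻¹ : ℝ) : ℂ) • V) := by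
  have hs : 0 ≤ (star w ⬝ᵥ w).re + V.trace.re :=
    add_nonneg (Complex.nonneg_iff.mp (dotProduct_star_self_nonneg w)).1 hV.re_trace_nonneg
  rw [← smul_add, WHP_ofReal_smul ghat ε η _ (inv_nonneg.mpr hs), div_eq_inv_mul]

theorem harvesting_eff_equiv_general {NT K J : ℕ} (h : Fin NT → ℂ)
    (ghat : Fin (K - 1) → Fin NT → ℂ) (lhat : Fin J → Fin NT → ℂ)
    (Γreq σz2 Pmax σPU2 : ℝ) (Γtol σzk2 ε : Fin (K - 1) → ℝ) (ΓtolPU υ : Fin J → ℝ)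
    (η : Fin (K - 1) → ℝ)
    (hΓreq : 0 < Γreq) (hσz : 0 < σz2) :
    (sSup {t : ℝ | ∃ w V, FeasOrig h ghat lhat Γreq σz2 Pmax σPU2 Γtol σzk2 ε ΓtolPU υ w V ∧
          t = WHP ghat ε η (Matrix.vecMulVec w (star w) + V) /
              ((star w ⬝ᵥ w).re + V.trace.re)} =
      sSup {t : ℝ | ∃ Wb Vb ξ,
          FeasTrans h ghat lhat Γreq σz2 Pmax σPU2 Γtol σzk2 ε ΓtolPU υ Wb Vb ξ ∧
          t = WHP ghat ε η (Wb + Vb)}) ∧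
    (∀ w V, FeasOrig h ghat lhat Γreq σz2 Pmax σPU2 Γtol σzk2 ε ΓtolPU υ w V →
        FeasTrans h ghat lhat Γreq σz2 Pmax σPU2 Γtol σzk2 ε ΓtolPU υ
          ((((star w ⬝ᵥ w).re + V.trace.re)⁻¹ : ℂ) • Matrix.vecMulVec w (star w))
          ((((star w ⬝ᵥ w).re + V.trace.re)⁻¹ : ℂ) • V)
          (((star w ⬝ᵥ w).re + V.trace.re)⁻¹) ∧
        WHP ghat ε η (Matrix.vecMulVec w (star w) + V) /
            ((star w ⬝ᵥ w).re + V.trace.re) =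
          WHP ghat ε η
            ((((star w ⬝ᵥ w).re + V.trace.re)⁻¹ : ℂ) • Matrix.vecMulVec w (star w) +
              (((star w ⬝ᵥ w).re + V.trace.re)⁻¹ : ℂ) • V)) := by
  simp only [← Complex.ofReal_add, ← Complex.ofReal_inv]
  refine ⟨congrArg sSup (Set.ext fun t => ⟨?_, ?_⟩), fun w V hF =>
    ⟨feasTrans_of_feasOrig hΓreq hσz hF, WHP_div_totalPower ghat ε η w hF.1⟩⟩
  · rintro ⟨w, V, hF, rfl⟩
    exact ⟨_, _, _, feasTrans_of_feasOrig hΓreq hσz hF, WHP_div_totalPower ghat ε η w hF.1⟩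
  · rintro ⟨Wb, Vb, ξ, hT, rfl⟩
    obtain ⟨w, V, hF, rfl, rfl⟩ := exists_feasOrig_of_feasTrans hT
    exact ⟨w, V, hF, (WHP_div_totalPower ghat ε η w hF.1).symm⟩

/-- Equivalence of the worst-case energy harvesting efficiency maximization problem and
its Charnes–Cooper transformed version: the optimal values coincide, and every feasible
`(w, V)` yields a feasible transformed point with the same objective value. -/
theorem harvesting_eff_equiv {NT K J : ℕ} (hNT : 1 ≤ NT) (h : Fin NT → ℂ)
    (ghat : Fin (K - 1) → Fin NT → ℂ) (lhat : Fin J → Fin NT → ℂ)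
    (Γreq σz2 Pmax σPU2 : ℝ) (Γtol σzk2 ε : Fin (K - 1) → ℝ) (ΓtolPU υ : Fin J → ℝ)
    (η : Fin (K - 1) → ℝ) (hη : ∀ k, 0 ≤ η k)
    (hΓreq : 0 < Γreq) (hσz : 0 < σz2) (hPmax : 0 < Pmax) (hσPU : 0 < σPU2)
    (hΓtol : ∀ k, 0 < Γtol k) (hσzk : ∀ k, 0 < σzk2 k) (hε : ∀ k, 0 < ε k)
    (hΓPU : ∀ j, 0 < ΓtolPU j) (hυ : ∀ j, 0 < υ j) :
    (sSup {t : ℝ | ∃ w V, FeasOrig h ghat lhat Γreq σz2 Pmax σPU2 Γtol σzk2 ε ΓtolPU υ w V ∧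
          t = WHP ghat ε η (Matrix.vecMulVec w (star w) + V) /
              ((star w ⬝ᵥ w).re + V.trace.re)} =
      sSup {t : ℝ | ∃ Wb Vb ξ,
          FeasTrans h ghat lhat Γreq σz2 Pmax σPU2 Γtol σzk2 ε ΓtolPU υ Wb Vb ξ ∧
          t = WHP ghat ε η (Wb + Vb)}) ∧
    (∀ w V, FeasOrig h ghat lhat Γreq σz2 Pmax σPU2 Γtol σzk2 ε ΓtolPU υ w V →
        FeasTrans h ghat lhat Γreq σz2 Pmax σPU2 Γtol σzk2 ε ΓtolPU υ
          ((((star w ⬝ᵥ w).re + V.trace.re)⁻¹ : ℂ) • Matrix.vecMulVec w (star w))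
          ((((star w ⬝ᵥ w).re + V.trace.re)⁻¹ : ℂ) • V)
          (((star w ⬝ᵥ w).re + V.trace.re)⁻¹) ∧
        WHP ghat ε η (Matrix.vecMulVec w (star w) + V) /
            ((star w ⬝ᵥ w).re + V.trace.re) =
          WHP ghat ε η
            ((((star w ⬝ᵥ w).re + V.trace.re)⁻¹ : ℂ) • Matrix.vecMulVec w (star w) +
              (((star w ⬝ᵥ w).re + V.trace.re)⁻¹ : ℂ) • V)) :=
  harvesting_eff_equiv_general h ghat lhat Γreq σz2 Pmax σPU2 Γtol σzk2 ε ΓtolPU υ η hΓreq hσz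
end

section
/- Suppose (W*, V*, ξ*, E*, I*) with W*, V* ∈ ℂ^{N_T×N_T} Hermitian positive semidefinite, ξ* ∈ ℝ, E* ∈ ℝ^{K−1}, I* ∈ ℝ^{J} satisfies, with H = h hᴴ: (C1) Tr(H W*) ≥ Γ_req (Tr(H V*) + σ_z² ξ*); (C2) for every k and every Δg with Δgᴴ Δg ≤ ε_k², writing g = ĝ_k + Δg: gᴴ W* g ≤ Γ_tol_k (gᴴ V* g + σ_{z_k}² ξ*); (C3) for every j and every Δl with Δlᴴ Δl ≤ υ_j², writing l = l̂_j + Δl: lᴴ W* l ≤ Γ_tol_j^PU (lᴴ V* l + σ_PU² ξ*); (C4) Tr(W*) + Tr(V*) ≤ P_max ξ*; (C6) ξ* ≥ 0; (C7) Tr(W*) + Tr(V*) = 1; (C10) for every k and Δg as above: −η_k gᴴ (W* + V*) g ≤ E*_k; (C11) for every j and Δl as above: lᴴ (W* + V*) l ≤ I*_j. Then hᴴ W* h > 0, and defining W̃ = (W* h)(W* h)ᴴ / (hᴴ W* h) and Ṽ = V* + W* − W̃, the tuple (W̃, Ṽ, ξ*, E*, I*) satisfies all of the constraints (C1)–(C4),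 (C6), (C7), (C10), (C11), with W̃ + Ṽ = W* + V*, Tr(H W̃) = Tr(H W*), Tr(H Ṽ) = Tr(H V*), and rank(W̃) = 1. In particular, from any feasible (hence any optimal) solution of the SDP-relaxed problem one can construct a feasible solution with a rank-one beamforming matrix that achieves the same values of ξ, E, I, and therefore the same weighted Tchebycheff objective value. -/
open Matrix
open scoped ComplexOrder

/-- The constraints (C1column)–(C4), (C6), (C7), (C10), (C11) of the SDP relaxation of the
transformed multi-objective resource allocation problem, in equivalent robust quantified
form, together with positive semidefiniteness of `W` and `V`. -/
def Constraints {NT K J : ℕ} (h : Fin NT → ℂ)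
    (ghat : Fin (K - 1) → Fin NT → ℂ) (lhat : Fin J → Fin NT → ℂ)
    (Γreq σz2 Pmax σPU2 : ℝ) (η Γtol σzk2 ε : Fin (K - 1) → ℝ) (ΓtolPU υ : Fin J → ℝ)
    (W V : Matrix (Fin NT) (Fin NT) ℂ) (ξ : ℝ)
    (E : Fin (K - 1) → ℝ) (I : Fin J → ℝ) : Prop :=
  W.PosSemidef ∧ V.PosSemidef ∧
  -- C1
  Γreq * ((Matrix.vecMulVec h (star h) * V).trace.re + σz2 * ξ) ≤
      (Matrix.vecMulVec h (star h) * W).trace.re ∧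
  -- C2
  (∀ k, ∀ Δg : Fin NT → ℂ, (star Δg ⬝ᵥ Δg).re ≤ ε k ^ 2 →
      (star (ghat k + Δg) ⬝ᵥ W *ᵥ (ghat k + Δg)).re ≤
        Γtol k * ((star (ghat k + Δg) ⬝ᵥ V *ᵥ (ghat k + Δg)).re + σzk2 k * ξ)) ∧
  -- C3
  (∀ j, ∀ Δl : Fin NT → ℂ, (star Δl ⬝ᵥ Δl).re ≤ υ j ^ 2 →
      (star (lhat j + Δl) ⬝ᵥ W *ᵥ (lhat j + Δl)).re ≤
        ΓtolPU j * ((star (lhat j + Δl) ⬝ᵥ V *ᵥ (lhat j + Δl)).re + σPU2 * ξ)) ∧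
  -- C4
  W.trace.re + V.trace.re ≤ Pmax * ξ ∧
  -- C6
  0 ≤ ξ ∧
  -- C7
  W.trace.re + V.trace.re = 1 ∧
  -- C10
  (∀ k, ∀ Δg : Fin NT → ℂ, (star Δg ⬝ᵥ Δg).re ≤ ε k ^ 2 →
      -η k * (star (ghat k + Δg) ⬝ᵥ (W + V) *ᵥ (ghat k + Δg)).re ≤ E k) ∧
  -- C11
  (∀ j, ∀ Δl : Fin NT → ℂ, (star Δl ⬝ᵥ Δl).re ≤ υ j ^ 2 →
      (star (lhat j + Δl) ⬝ᵥ (W + V) *ᵥ (lhat j + Δl)).re ≤ I j)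

/-!
For positive semidefinite `W` with `c = hᴴ W h > 0`, the matrix `W̃ = (W h)(W h)ᴴ / c` is
rank one and positive semidefinite, agrees with `W` on the quadratic form at `h`, and satisfies
`W̃ ≤ W` in the Loewner order: `xᴴ (W - W̃) x = xᴴ W x - |hᴴ W x|² / c ≥ 0` is the Cauchy–Schwarz
inequality for the semi-inner product `⟨x, y⟩ = xᴴ W y`. Moving the surplus `W - W̃` into the
artificial-noise covariance therefore leaves `W + V`, the SINR of the desired receiver and all
traces unchanged, lowers every eavesdropper's signal power and raises its noise power. Finally
`c > 0` because `c = 0` would force `ξ = 0` through (C1), contradicting (C4) and (C7).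
-/

namespace Matrix

lemma trace_vecMulVec_mul {R n : Type*} [CommSemiring R] [Fintype n] (u v : n → R)
    (M : Matrix n n R) : (vecMulVec u v * M).trace = v ⬝ᵥ M *ᵥ u := by
  rw [vecMulVec_mul, trace_vecMulVec, dotProduct_comm, dotProduct_mulVec]

variable {𝕜 n : Type*} [RCLike 𝕜] [Fintype n]

lemma IsHermitian.star_dotProduct_mulVec {A : Matrix n n 𝕜} (hA : A.IsHermitian) (x y : n → 𝕜) :
    star (star x ⬝ᵥ A *ᵥ y) = star y ⬝ᵥ A *ᵥ x := by
  rw [star_dotProduct, star_star, star_mulVec, hA.eq, ← dotProduct_mulVec, dotProduct_comm]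

lemma IsHermitian.posSemidef_of_re_nonneg {A : Matrix n n 𝕜} (hA : A.IsHermitian)
    (h : ∀ x, 0 ≤ RCLike.re (star x ⬝ᵥ A *ᵥ x)) : A.PosSemidef :=
  .of_dotProduct_mulVec_nonneg hA fun x =>
    RCLike.nonneg_iff.mpr ⟨h x, hA.im_star_dotProduct_mulVec_self x⟩

lemma PosSemidef.norm_dotProduct_mulVec_sq_le {A : Matrix n n 𝕜} (hA : A.PosSemidef)
    (x y : n → 𝕜) :
    ‖star x ⬝ᵥ A *ᵥ y‖ ^ 2 ≤ RCLike.re (star x ⬝ᵥ A *ᵥ x) * RCLike.re (star y ⬝ᵥ A *ᵥ y) := by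
  let _ := A.toSeminormedAddCommGroup hA
  let _ := A.toInnerProductSpace hA
  have h := inner_mul_inner_self_le (𝕜 := 𝕜) x y
  change ‖(A *ᵥ y) ⬝ᵥ star x‖ * ‖(A *ᵥ x) ⬝ᵥ star y‖ ≤
    RCLike.re ((A *ᵥ x) ⬝ᵥ star x) * RCLike.re ((A *ᵥ y) ⬝ᵥ star y) at h
  simp only [dotProduct_comm (A *ᵥ _)] at h
  rwa [← hA.isHermitian.star_dotProduct_mulVec x y, norm_star, ← sq] at h

lemma IsHermitian.ofReal_re_dotProduct_mulVec_self {A : Matrix n n 𝕜} (hA : A.IsHermitian)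
    (x : n → 𝕜) : (RCLike.re (star x ⬝ᵥ A *ᵥ x) : 𝕜) = star x ⬝ᵥ A *ᵥ x :=
  RCLike.conj_eq_iff_re.mp (hA.star_dotProduct_mulVec x x)

noncomputable def rankOnePart (W : Matrix n n 𝕜) (h : n → 𝕜) : Matrix n n 𝕜 :=
  (star h ⬝ᵥ W *ᵥ h)⁻¹ • vecMulVec (W *ᵥ h) (star (W *ᵥ h))

variable {W : Matrix n n 𝕜} {h : n → 𝕜}

lemma IsHermitian.rankOnePart (hW : W.IsHermitian) : (W.rankOnePart h).IsHermitian := by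
  rw [Matrix.rankOnePart, IsHermitian, conjTranspose_smul, conjTranspose_vecMulVec, star_star,
    star_inv₀, hW.star_dotProduct_mulVec]

lemma IsHermitian.re_dotProduct_rankOnePart_mulVec (hW : W.IsHermitian) (x : n → 𝕜) :
    RCLike.re (star x ⬝ᵥ W.rankOnePart h *ᵥ x) =
      ‖star h ⬝ᵥ W *ᵥ x‖ ^ 2 / RCLike.re (star h ⬝ᵥ W *ᵥ h) := by
  have hu : star (W *ᵥ h) ⬝ᵥ x = star h ⬝ᵥ W *ᵥ x := by
    rw [star_mulVec, hW.eq, ← dotProduct_mulVec]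
  have hx : star x ⬝ᵥ W *ᵥ h = star (star h ⬝ᵥ W *ᵥ x) := (hW.star_dotProduct_mulVec h x).symm
  simp only [Matrix.rankOnePart, smul_mulVec, vecMulVec_mulVec, op_smul_eq_smul, dotProduct_smul,
    hu, hx, smul_eq_mul, RCLike.star_def, RCLike.mul_conj]
  rw [← hW.ofReal_re_dotProduct_mulVec_self h, ← RCLike.ofReal_pow, ← RCLike.ofReal_inv,
    ← RCLike.ofReal_mul, RCLike.ofReal_re, RCLike.ofReal_re, inv_mul_eq_div]

lemma PosSemidef.rankOnePart (hW : W.PosSemidef) : (W.rankOnePart h).PosSemidef :=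
  IsHermitian.posSemidef_of_re_nonneg hW.isHermitian.rankOnePart fun x => by
    rw [hW.isHermitian.re_dotProduct_rankOnePart_mulVec]
    exact div_nonneg (sq_nonneg _) (hW.re_dotProduct_nonneg h)

lemma PosSemidef.sub_rankOnePart (hW : W.PosSemidef) : (W - W.rankOnePart h).PosSemidef :=
  IsHermitian.posSemidef_of_re_nonneg (hW.isHermitian.sub hW.isHermitian.rankOnePart) fun x => by
    rw [sub_mulVec, dotProduct_sub, map_sub, hW.isHermitian.re_dotProduct_rankOnePart_mulVec,
      sub_nonneg]
    exact div_le_of_le_mul₀ (hW.re_dotProduct_nonneg h) (hW.re_dotProduct_nonneg x)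
      ((hW.norm_dotProduct_mulVec_sq_le h x).trans_eq (mul_comm _ _))

lemma IsHermitian.rankOnePart_mulVec_self (hW : W.IsHermitian) (hc : star h ⬝ᵥ W *ᵥ h ≠ 0) :
    W.rankOnePart h *ᵥ h = W *ᵥ h := by
  rw [Matrix.rankOnePart, smul_mulVec, vecMulVec_mulVec, op_smul_eq_smul, star_mulVec, hW.eq,
    ← dotProduct_mulVec, smul_smul, inv_mul_cancel₀ hc, one_smul]

lemma IsHermitian.rank_rankOnePart (hW : W.IsHermitian) (hc : star h ⬝ᵥ W *ᵥ h ≠ 0) :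
    (W.rankOnePart h).rank = 1 := by
  have hWh : W *ᵥ h ≠ 0 := fun h0 => hc (by rw [h0, dotProduct_zero])
  have hrange : LinearMap.range (W.rankOnePart h).mulVecLin = 𝕜 ∙ (W *ᵥ h) := by
    refine le_antisymm ?_ (Submodule.span_singleton_le_iff_mem _ _ |>.mpr ⟨h, ?_⟩)
    · rintro _ ⟨x, rfl⟩
      rw [mulVecLin_apply, Matrix.rankOnePart, smul_mulVec, vecMulVec_mulVec, op_smul_eq_smul,
        smul_smul]
      exact Submodule.smul_mem _ _ (Submodule.mem_span_singleton_self _)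
    · rw [mulVecLin_apply, hW.rankOnePart_mulVec_self hc]
  rw [rank, hrange, finrank_span_singleton hWh]

end Matrix

section Constraints

variable {NT K J : ℕ} {h : Fin NT → ℂ} {ghat : Fin (K - 1) → Fin NT → ℂ}
  {lhat : Fin J → Fin NT → ℂ} {Γreq σz2 Pmax σPU2 : ℝ} {η Γtol σzk2 ε : Fin (K - 1) → ℝ}
  {ΓtolPU υ : Fin J → ℝ} {W V : Matrix (Fin NT) (Fin NT) ℂ} {ξ : ℝ} {E : Fin (K - 1) → ℝ}
  {I : Fin J → ℝ}

theorem Constraints.re_dotProduct_mulVec_pos (hΓreq : 0 < Γreq) (hσz : 0 < σz2)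
    (hfeas : Constraints h ghat lhat Γreq σz2 Pmax σPU2 η Γtol σzk2 ε ΓtolPU υ W V ξ E I) :
    0 < (star h ⬝ᵥ W *ᵥ h).re := by
  obtain ⟨-, hV, hC1, -, -, hC4, hC6, hC7, -⟩ := hfeas
  rw [trace_vecMulVec_mul, trace_vecMulVec_mul] at hC1
  have hVh : 0 ≤ (star h ⬝ᵥ V *ᵥ h).re := hV.re_dotProduct_nonneg h
  by_contra! hWh
  have hξ : ξ = 0 := by
    refine le_antisymm ?_ hC6
    have : Γreq * (σz2 * ξ) ≤ 0 := by nlinarith [mul_nonneg hΓreq.le hVh]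
    exact nonpos_of_mul_nonpos_right (nonpos_of_mul_nonpos_right this hΓreq) hσz
  rw [hξ, mul_zero, hC7] at hC4
  exact one_pos.not_ge hC4

theorem Constraints.of_posSemidef_sub {W' : Matrix (Fin NT) (Fin NT) ℂ}
    (hΓtol : ∀ k, 0 ≤ Γtol k) (hΓPU : ∀ j, 0 ≤ ΓtolPU j)
    (hW' : W'.PosSemidef) (hWW' : (W - W').PosSemidef)
    (hh : star h ⬝ᵥ W' *ᵥ h = star h ⬝ᵥ W *ᵥ h)
    (hfeas : Constraints h ghat lhat Γreq σz2 Pmax σPU2 η Γtol σzk2 ε ΓtolPU υ W V ξ E I) :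
    Constraints h ghat lhat Γreq σz2 Pmax σPU2 η Γtol σzk2 ε ΓtolPU υ W' (V + W - W') ξ E I := by
  obtain ⟨-, hV, hC1, hC2, hC3, hC4, hC6, hC7, hC10, hC11⟩ := hfeas
  have hsum : W' + (V + W - W') = W + V := by abel
  have hgap (x : Fin NT → ℂ) : 0 ≤ (star x ⬝ᵥ W *ᵥ x).re - (star x ⬝ᵥ W' *ᵥ x).re := by
    simpa [sub_mulVec, dotProduct_sub] using hWW'.re_dotProduct_nonneg x
  have hV' (x : Fin NT → ℂ) : (star x ⬝ᵥ (V + W - W') *ᵥ x).re =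
      (star x ⬝ᵥ V *ᵥ x).re + ((star x ⬝ᵥ W *ᵥ x).re - (star x ⬝ᵥ W' *ᵥ x).re) := by
    simp only [sub_mulVec, add_mulVec, dotProduct_sub, dotProduct_add, Complex.sub_re,
      Complex.add_re]
    ring
  have htr : W'.trace.re + (V + W - W').trace.re = W.trace.re + V.trace.re := by
    rw [← Complex.add_re, ← trace_add, hsum, trace_add, Complex.add_re]
  refine ⟨hW', add_sub_assoc V W W' ▸ hV.add hWW', ?_, fun k Δg hΔ => ?_, fun j Δl hΔ => ?_,
    htr ▸ hC4, hC6, htr ▸ hC7, fun k Δg hΔ => hsum ▸ hC10 k Δg hΔ,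
    fun j Δl hΔ => hsum ▸ hC11 j Δl hΔ⟩
  · rw [trace_vecMulVec_mul, trace_vecMulVec_mul, hV', hh, sub_self, add_zero]
    rwa [trace_vecMulVec_mul, trace_vecMulVec_mul] at hC1
  · have := hC2 k Δg hΔ
    rw [hV']
    linarith [hgap (ghat k + Δg), mul_nonneg (hΓtol k) (hgap (ghat k + Δg))]
  · have := hC3 j Δl hΔ
    rw [hV']
    linarith [hgap (lhat j + Δl), mul_nonneg (hΓPU j) (hgap (lhat j + Δl))]

end Constraints

theorem rank_one_feasible_construction_general {NT K J : ℕ} (h : Fin NT → ℂ)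
    (ghat : Fin (K - 1) → Fin NT → ℂ) (lhat : Fin J → Fin NT → ℂ)
    (Γreq σz2 Pmax σPU2 : ℝ) (η Γtol σzk2 ε : Fin (K - 1) → ℝ) (ΓtolPU υ : Fin J → ℝ)
    (hΓreq : 0 < Γreq) (hσz : 0 < σz2) (hΓtol : ∀ k, 0 < Γtol k) (hΓPU : ∀ j, 0 < ΓtolPU j)
    (W V : Matrix (Fin NT) (Fin NT) ℂ) (ξ : ℝ) (E : Fin (K - 1) → ℝ) (I : Fin J → ℝ)
    (hfeas : Constraints h ghat lhat Γreq σz2 Pmax σPU2 η Γtol σzk2 ε ΓtolPU υ W V ξ E I) :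
    0 < (star h ⬝ᵥ W *ᵥ h).re ∧
    (let Wt : Matrix (Fin NT) (Fin NT) ℂ :=
        (star h ⬝ᵥ W *ᵥ h)⁻¹ • Matrix.vecMulVec (W *ᵥ h) (star (W *ᵥ h))
     let Vt : Matrix (Fin NT) (Fin NT) ℂ := V + W - Wt
     Constraints h ghat lhat Γreq σz2 Pmax σPU2 η Γtol σzk2 ε ΓtolPU υ Wt Vt ξ E I ∧
     Wt + Vt = W + V ∧
     (Matrix.vecMulVec h (star h) * Wt).trace = (Matrix.vecMulVec h (star h) * W).trace ∧
     (Matrix.vecMulVec h (star h) * Vt).trace = (Matrix.vecMulVec h (star h) * V).trace ∧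
     Wt.rank = 1) := by
  have hpos := hfeas.re_dotProduct_mulVec_pos hΓreq hσz
  have hW : W.PosSemidef := hfeas.1
  have hc : star h ⬝ᵥ W *ᵥ h ≠ 0 := fun h0 => by simp [h0] at hpos
  have hWh : star h ⬝ᵥ W.rankOnePart h *ᵥ h = star h ⬝ᵥ W *ᵥ h := by
    rw [hW.isHermitian.rankOnePart_mulVec_self hc]
  refine ⟨hpos, ?_⟩
  dsimp only
  rw [← rankOnePart.eq_1]
  refine ⟨hfeas.of_posSemidef_sub (fun k => (hΓtol k).le) (fun j => (hΓPU j).le)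
      hW.rankOnePart hW.sub_rankOnePart hWh, by abel, ?_, ?_, hW.isHermitian.rank_rankOnePart hc⟩
  · rw [trace_vecMulVec_mul, trace_vecMulVec_mul, hWh]
  · rw [trace_vecMulVec_mul, trace_vecMulVec_mul, sub_mulVec, add_mulVec, dotProduct_sub,
      dotProduct_add, hWh, add_sub_cancel_right]

/-- From any feasible solution of the SDP-relaxed problem one can construct a feasible
solution with a rank-one beamforming matrix `W̃ = (W* h)(W* h)ᴴ/(hᴴ W* h)` and
artificial-noise covariance `Ṽ = V* + W* − W̃`, achieving the same values of `ξ`, `E`, `I`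
(and hence the same weighted Tchebycheff objective value). -/
theorem rank_one_feasible_construction {NT K J : ℕ}
    (hNT : 1 ≤ NT) (hK : 2 ≤ K) (hJ : 1 ≤ J) (h : Fin NT → ℂ)
    (ghat : Fin (K - 1) → Fin NT → ℂ) (lhat : Fin J → Fin NT → ℂ)
    (Γreq σz2 Pmax σPU2 : ℝ) (η Γtol σzk2 ε : Fin (K - 1) → ℝ) (ΓtolPU υ : Fin J → ℝ)
    (hΓreq : 0 < Γreq) (hσz : 0 < σz2) (hPmax : 0 < Pmax) (hσPU : 0 < σPU2)
    (hη : ∀ k, 0 < η k) (hΓtol : ∀ k, 0 < Γtol k) (hσzk : ∀ k, 0 < σzk2 k)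
    (hε : ∀ k, 0 < ε k) (hΓPU : ∀ j, 0 < ΓtolPU j) (hυ : ∀ j, 0 < υ j)
    (W V : Matrix (Fin NT) (Fin NT) ℂ) (ξ : ℝ) (E : Fin (K - 1) → ℝ) (I : Fin J → ℝ)
    (hfeas : Constraints h ghat lhat Γreq σz2 Pmax σPU2 η Γtol σzk2 ε ΓtolPU υ W V ξ E I) :
    0 < (star h ⬝ᵥ W *ᵥ h).re ∧
    (let Wt : Matrix (Fin NT) (Fin NT) ℂ :=
        (star h ⬝ᵥ W *ᵥ h)⁻¹ • Matrix.vecMulVec (W *ᵥ h) (star (W *ᵥ h))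
     let Vt : Matrix (Fin NT) (Fin NT) ℂ := V + W - Wt
     Constraints h ghat lhat Γreq σz2 Pmax σPU2 η Γtol σzk2 ε ΓtolPU υ Wt Vt ξ E I ∧
     Wt + Vt = W + V ∧
     (Matrix.vecMulVec h (star h) * Wt).trace = (Matrix.vecMulVec h (star h) * W).trace ∧
     (Matrix.vecMulVec h (star h) * Vt).trace = (Matrix.vecMulVec h (star h) * V).trace ∧
     Wt.rank = 1) :=
  rank_one_feasible_construction_general h ghat lhat Γreq σz2 Pmax σPU2 η Γtol σzk2 ε ΓtolPU υ hΓreq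
    hσz hΓtol hΓPU W V ξ E I hfeas
end
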